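/- Let T be a relation over a scheme S. Then: (1) for S' ⊆ S, ε(π_{S'}(T)) = C_{S∖S'}(ε(T)); (2) for x, y ∈ S, ε(σ_{x≈y}(T)) = ε(T) ∩ D_{x,y}; (3) for x ∈ S and y ∉ S, ε(ρ_{y←x}(T)) = Cₓ(ε(T) ∩ D_{x,y}). -/

import Mathlib

/-- Restriction of a tuple over `S` to a subscheme `S'`. -/
def restr {𝒳 M : Type} {S' S : Set 𝒳} (h : S' ⊆ S) (t : S → M) : S' → M :=
  fun a => t ⟨a.1, h a.2⟩

/-- `eps T` is the set of all valuations whose restriction to `S` lies in `T`. -/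
def eps {𝒳 M : Type} {S : Set 𝒳} (T : Set (S → M)) : Set (𝒳 → M) :=
  {v | (fun a : S => v a.1) ∈ T}

/-- Cylindrification along a set `X` of variables. -/
def cyl {𝒳 M : Type} (X : Set 𝒳) (V : Set (𝒳 → M)) : Set (𝒳 → M) :=
  {v | ∃ u ∈ V, ∀ y ∉ X, u y = v y}

/-- The diagonal `D_{x,y}`. -/
def diag {𝒳 M : Type} (x y : 𝒳) : Set (𝒳 → M) := {v | v x = v y}

/-- Projection of a relation over `S` onto `S' ⊆ S`. -/
def projRel {𝒳 M : Type} {S : Set 𝒳} (S' : Set 𝒳) (h : S' ⊆ S) (T : Set (S → M)) :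
    Set (S' → M) :=
  restr h '' T

/-- Selection `σ_{x≈y}`. -/
def sel {𝒳 M : Type} {S : Set 𝒳} (x y : 𝒳) (hx : x ∈ S) (hy : y ∈ S)
    (T : Set (S → M)) : Set (S → M) :=
  {t ∈ T | t ⟨x, hx⟩ = t ⟨y, hy⟩}

/-- Renaming of the tuple `t` over `S`: variable `x` is renamed to `y`. -/
def renTup {𝒳 M : Type} [DecidableEq 𝒳] {S : Set 𝒳} (x y : 𝒳) (hx : x ∈ S)
    (t : S → M) : (↥((S \ {x}) ∪ {y})) → M :=
  fun z =>
    if h : z.1 = y then t ⟨x, hx⟩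
    else t ⟨z.1, by
      rcases z.2 with h' | h'
      · exact h'.1
      · exact absurd h' h⟩

/-- Renaming `ρ_{y←x}` of a relation over `S`. -/
def ren {𝒳 M : Type} [DecidableEq 𝒳] {S : Set 𝒳} (x y : 𝒳) (hx : x ∈ S)
    (T : Set (S → M)) : Set ((↥((S \ {x}) ∪ {y})) → M) :=
  renTup x y hx '' T

theorem stmt2 {𝒳 M : Type} [Fintype 𝒳] [DecidableEq 𝒳] [Fintype M] [Nonempty M]
    (S : Set 𝒳) (T : Set (S → M)) :
    -- (1)
    (∀ (S' : Set 𝒳) (h : S' ⊆ S), eps (projRel S' h T) = cyl (S \ S') (eps T)) ∧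
    -- (2)
    (∀ (x y : 𝒳) (hx : x ∈ S) (hy : y ∈ S),
      eps (sel x y hx hy T) = eps T ∩ diag x y) ∧
    -- (3)
    (∀ (x y : 𝒳) (hx : x ∈ S), y ∉ S →
      eps (ren x y hx T) = cyl {x} (eps T ∩ diag x y)) := by
  classical
  refine ⟨?_, ?_, ?_⟩
  · intro S' h
    ext v
    constructor
    · rintro ⟨t, ht, hrt⟩
      refine ⟨fun z => if hz : z ∈ S then t ⟨z, hz⟩ else v z, ?_, ?_⟩
      · show (fun a : S => _) ∈ T
        convert ht using 1
        funext a
        simp [a.2]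
      · intro z hz
        by_cases hzS : z ∈ S
        · have hzS' : z ∈ S' := by
            by_contra hc
            exact hz ⟨hzS, hc⟩
          simpa [hzS, restr] using congrFun hrt ⟨z, hzS'⟩
        · simp [hzS]
    · rintro ⟨u, hu, huv⟩
      refine ⟨fun a : S => u a.1, hu, ?_⟩
      funext a
      exact huv a.1 (fun hc => hc.2 a.2)
  · intro x y hx hy
    ext v
    constructor
    · rintro ⟨h1, h2⟩
      exact ⟨h1, h2⟩
    · rintro ⟨h1, h2⟩
      exact ⟨h1, h2⟩
  · intro x y hx hy
    have hne : y ≠ x := fun hc => hy (hc ▸ hx)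
    ext v
    constructor
    · rintro ⟨t, ht, hrt⟩
      refine ⟨fun z => if hz : z ∈ S then t ⟨z, hz⟩ else v z, ⟨?_, ?_⟩, ?_⟩
      · show (fun a : S => _) ∈ T
        convert ht using 1
        funext a
        simp [a.2]
      · show (if hz : x ∈ S then t ⟨x, hz⟩ else v x) = (if hz : y ∈ S then t ⟨y, hz⟩ else v y)
        have hyS'' : y ∈ (S \ {x}) ∪ ({y} : Set 𝒳) := Or.inr rfl
        have := congrFun hrt ⟨y, hyS''⟩
        simp only [renTup] at this
        simp [hx, hy, ← this]
      · intro z hz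
        have hzx : z ≠ x := hz
        by_cases hzS : z ∈ S
        · have hzS'' : z ∈ (S \ {x}) ∪ ({y} : Set 𝒳) := Or.inl ⟨hzS, hzx⟩
          have := congrFun hrt ⟨z, hzS''⟩
          have hzy : z ≠ y := fun hc => hy (hc ▸ hzS)
          simp only [renTup, hzy, dif_neg, not_false_iff] at this
          simpa [hzS] using this
        · simp [hzS]
    · rintro ⟨u, ⟨hu, hud⟩, huv⟩
      refine ⟨fun a : S => u a.1, hu, ?_⟩
      funext z
      rcases z with ⟨z, hz⟩
      by_cases hzy : z = y
      · subst hzy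
        simp only [renTup, dif_pos rfl]
        have : u x = v z := hud.trans (huv z hne)
        exact this
      · have hzS : z ∈ S ∧ z ≠ x := by
          rcases hz with h' | h'
          · exact ⟨h'.1, h'.2⟩
          · exact absurd h' hzy
        simp only [renTup, dif_neg hzy]
        exact huv z hzS.2
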